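/- arXiv:2310.05179 — 2 statements merged into one kernel-verified Lean document; each statement's English description precedes it below -/
import Mathlib

section
/- For every G > 0 there exists a constant C > 0 (depending only on G) with the following property. Let T ≥ 1, let A ⊆ [0, 1] be a nonempty compact set, let l_1, …, l_T : ℝ → ℝ each be G-Lipschitz, let A' ⊆ A be a nonempty finite set with sup_{α ∈ A} inf_{α' ∈ A'} |α − α'| ≤ T^{−1/2}, let σ be a random variable with the exponential distribution of rate η = T^{−1/2} on [0, ∞), and for each t = 1, …, T let α_t : [0, ∞) → A' be a measurable selection with α_t(s) ∈ argmin_{α ∈ A'} ( Σ_{i=1}^{t−1} l_i(α) − s·α ) for every s ≥ 0. Then E[ Σ_{t=1}^{T} l_t(α_t(σ)) ] − min_{α ∈ A} Σ_{t=1}^{T} l_t(α) ≤ C·√T. -/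
/-!
Fix the perturbation `s ≥ 0`. Telescoping the minimality of the leaders of consecutive rounds
(be-the-leader) bounds the loss of FTPL by the loss of any `β ∈ A'`, plus `G + s`, plus the
stability terms `l t (α t s) - l t (α (t + 1) s)`. The leader `α t s` minimises `L_t - s • id`
with `L_t = ∑ i ∈ Ico 1 t, l i`, so it is nondecreasing in the tilt `s`; and since
`L_(t+1) - L_t = l t` is `G`-Lipschitz, raising the tilt by `c > G` outweighs the new loss:
`α t s ≤ α (t + 1) (s + c)` and `α (t + 1) s ≤ α t (s + c)`. So `|α t s - α (t + 1) s|` is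
bounded by the increments of both leaders over `[s, s + c]`. For `σ` exponential of rate `η`
the density ratio gives `E f (σ + c) ≤ exp (η c) E f σ`, so each increment of a `[0, 1]`-valued
leader has expectation at most `exp (η c) - 1 = O(η)`. Summing over the `T` rounds, adding
`E σ = 1 / η` and the error `G √T` of the `T^{-1/2}`-net, and taking `η = T^{-1/2}` gives
`O(√T)`.
-/

open MeasureTheory ProbabilityTheory Finset
open scoped ENNReal NNReal

theorem sum_le_sum_add_card_mul_of_lipschitzWith {ι : Type*} {s : Finset ι} {l : ι → ℝ → ℝ}
    {K : ℝ≥0} (hl : ∀ t ∈ s, LipschitzWith K (l t)) {a b δ : ℝ} (hab : |a - b| ≤ δ) :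
    ∑ t ∈ s, l t b ≤ ∑ t ∈ s, l t a + #s * (K * δ) := by
  rw [← nsmul_eq_mul, ← sum_const, ← sum_add_distrib]
  refine sum_le_sum fun t ht => ?_
  have := (hl t ht).dist_le_mul b a
  rw [Real.dist_eq, Real.dist_eq, abs_sub_comm b a] at this
  nlinarith [le_abs_self (l t b - l t a), K.2]

theorem nat_mul_exp_div_sqrt_sub_one_le {T : ℕ} (hT : 1 ≤ T) {a : ℝ} (ha : 0 ≤ a) :
    T * (Real.exp (a / √T) - 1) ≤ a * Real.exp a * √T := by
  have hsqrt : 1 ≤ √(T : ℝ) := Real.one_le_sqrt.2 (by exact_mod_cast hT)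
  have hx : a / √T ≤ a := div_le_self ha hsqrt
  have hexp : Real.exp (a / √T) - 1 ≤ a / √T * Real.exp (a / √T) := by
    have := mul_le_mul_of_nonneg_right (Real.one_sub_le_exp_neg (a / √T)) (Real.exp_pos (a / √T)).le
    rw [← Real.exp_add, neg_add_cancel, Real.exp_zero] at this
    linarith
  calc T * (Real.exp (a / √T) - 1) ≤ T * (a / √T * Real.exp (a / √T)) := by gcongr
    _ = a * Real.exp (a / √T) * (T / √T) := by ring
    _ = a * Real.exp (a / √T) * √T := by rw [Real.div_sqrt]
    _ ≤ a * Real.exp a * √T := by gcongr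

namespace ProbabilityTheory

open Real

theorem ae_nonneg_expMeasure (r : ℝ) : ∀ᵐ s ∂expMeasure r, 0 ≤ s := by
  simp only [ae_iff, not_le]
  change (volume.withDensity (exponentialPDF r)) (Set.Iio 0) = 0
  rw [withDensity_apply _ measurableSet_Iio, lintegral_exponentialPDF_of_nonpos le_rfl]

theorem lintegral_comp_add_le_expMeasure (r : ℝ) {c : ℝ} (hc : 0 ≤ c) {g : ℝ → ℝ≥0∞}
    (hg : Measurable g) :
    ∫⁻ s, g (s + c) ∂expMeasure r ≤ ENNReal.ofReal (exp (r * c)) * ∫⁻ s, g s ∂expMeasure r := by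
  have hpdf : Measurable (exponentialPDF r) := (measurable_exponentialPDFReal r).ennreal_ofReal
  change ∫⁻ s, g (s + c) ∂volume.withDensity (exponentialPDF r) ≤
    _ * ∫⁻ s, g s ∂volume.withDensity (exponentialPDF r)
  have hgc : Measurable fun s => g (s + c) := hg.comp (measurable_add_const c)
  rw [lintegral_withDensity_eq_lintegral_mul _ hpdf hgc,
    lintegral_withDensity_eq_lintegral_mul _ hpdf hg, ← lintegral_const_mul _ (hpdf.mul hg)]
  -- the density of `σ + c` is `exponentialPDF r (· - c) ≤ exp (r * c) • exponentialPDF r`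
  calc ∫⁻ s, exponentialPDF r s * g (s + c)
      = ∫⁻ u, exponentialPDF r (u - c) * g u := by
        simpa using
          lintegral_add_right_eq_self (μ := volume) (fun u => exponentialPDF r (u - c) * g u) c
    _ ≤ ∫⁻ u, ENNReal.ofReal (exp (r * c)) * (exponentialPDF r u * g u) := by
        refine lintegral_mono fun u => ?_
        rw [← mul_assoc]
        gcongr
        rcases lt_or_ge (u - c) 0 with hu | hu
        · simp [exponentialPDF_of_neg hu]
        · rw [exponentialPDF_of_nonneg hu, exponentialPDF_of_nonneg (by linarith),
            ← ENNReal.ofReal_mul (exp_pos _).le]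
          refine le_of_eq (congrArg ENNReal.ofReal ?_)
          rw [show -(r * (u - c)) = r * c + -(r * u) by ring, exp_add]
          ring

theorem integral_comp_add_sub_le_expMeasure {r c : ℝ} (hr : 0 < r) (hc : 0 ≤ c) {f : ℝ → ℝ}
    (hf : Measurable f) (hf01 : ∀ s, 0 ≤ s → f s ∈ Set.Icc 0 1) :
    ∫ s, (f (s + c) - f s) ∂expMeasure r ≤ exp (r * c) - 1 := by
  have := isProbabilityMeasure_expMeasure hr
  have hf' : ∀ᵐ s ∂expMeasure r, f s ∈ Set.Icc 0 1 := (ae_nonneg_expMeasure r).mono hf01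
  have hfc' : ∀ᵐ s ∂expMeasure r, f (s + c) ∈ Set.Icc 0 1 :=
    (ae_nonneg_expMeasure r).mono fun s hs => hf01 _ (by linarith)
  have hfi := Integrable.of_mem_Icc 0 1 hf.aemeasurable hf'
  have hfci : Integrable (fun s => f (s + c)) (expMeasure r) :=
    .of_mem_Icc 0 1 (hf.comp (measurable_add_const c)).aemeasurable hfc'
  have hI0 : 0 ≤ ∫ s, f s ∂expMeasure r := integral_nonneg_of_ae (hf'.mono fun s hs => hs.1)
  have hI1 : ∫ s, f s ∂expMeasure r ≤ 1 :=
    (integral_mono_ae hfi (integrable_const 1) (hf'.mono fun s hs => hs.2)).trans (by simp)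
  have hshift : ∫ s, f (s + c) ∂expMeasure r ≤ exp (r * c) * ∫ s, f s ∂expMeasure r := by
    rw [← ENNReal.ofReal_le_ofReal_iff (by positivity),
      ofReal_integral_eq_lintegral_ofReal hfci (hfc'.mono fun s hs => hs.1),
      ENNReal.ofReal_mul (exp_pos _).le,
      ofReal_integral_eq_lintegral_ofReal hfi (hf'.mono fun s hs => hs.1)]
    exact lintegral_comp_add_le_expMeasure r hc hf.ennreal_ofReal
  have hexp : 1 ≤ exp (r * c) := one_le_exp (by positivity)
  rw [integral_sub hfci hfi]
  nlinarith [mul_nonneg (sub_nonneg.2 hexp) (sub_nonneg.2 hI1)]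

theorem lintegral_ofReal_id_expMeasure {r : ℝ} (hr : 0 < r) :
    ∫⁻ s, ENNReal.ofReal s ∂expMeasure r = ENNReal.ofReal r⁻¹ := by
  have hpdf : Measurable (exponentialPDF r) := (measurable_exponentialPDFReal r).ennreal_ofReal
  change ∫⁻ s, ENNReal.ofReal s ∂volume.withDensity (exponentialPDF r) = _
  rw [lintegral_withDensity_eq_lintegral_mul _ hpdf ENNReal.measurable_ofReal]
  -- `s * exponentialPDF r s = r⁻¹ * gammaPDF 2 r s`
  calc ∫⁻ s, (exponentialPDF r * fun s => ENNReal.ofReal s) s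
      = ∫⁻ s, ENNReal.ofReal r⁻¹ * gammaPDF 2 r s := by
        refine lintegral_congr fun s => ?_
        rcases lt_or_ge s 0 with hs | hs
        · simp [exponentialPDF_of_neg hs, gammaPDF_of_neg hs]
        · rw [Pi.mul_apply, exponentialPDF_of_nonneg hs, gammaPDF_of_nonneg hs,
            ← ENNReal.ofReal_mul (by positivity), ← ENNReal.ofReal_mul (by positivity),
            Gamma_two, show (2 : ℝ) - 1 = 1 by norm_num, rpow_one, rpow_two]
          congr 1
          field_simp
    _ = ENNReal.ofReal r⁻¹ := by
        have hγ : Measurable (gammaPDF 2 r) := (measurable_gammaPDFReal 2 r).ennreal_ofReal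
        rw [lintegral_const_mul _ hγ,
          lintegral_gammaPDF_eq_one two_pos hr, mul_one]

theorem integrable_id_expMeasure {r : ℝ} (hr : 0 < r) : Integrable (fun s => s) (expMeasure r) :=
  ⟨measurable_id.aestronglyMeasurable, (hasFiniteIntegral_iff_ofReal (ae_nonneg_expMeasure r)).2
    (by rw [lintegral_ofReal_id_expMeasure hr]; exact ENNReal.ofReal_lt_top)⟩

theorem integral_id_expMeasure {r : ℝ} (hr : 0 < r) : ∫ s, s ∂expMeasure r = r⁻¹ := by
  rw [integral_eq_lintegral_of_nonneg_ae (ae_nonneg_expMeasure r)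
    measurable_id.aestronglyMeasurable, lintegral_ofReal_id_expMeasure hr,
    ENNReal.toReal_ofReal (inv_nonneg.2 hr.le)]

end ProbabilityTheory

theorem Continuous.integrable_comp_expMeasure {r : ℝ} (hr : 0 < r) {φ g : ℝ → ℝ} {k : Set ℝ}
    (hφ : Continuous φ) (hk : IsCompact k) (hg : Measurable g) (hgk : ∀ s, 0 ≤ s → g s ∈ k) :
    Integrable (fun s => φ (g s)) (expMeasure r) := by
  have := isProbabilityMeasure_expMeasure hr
  obtain ⟨C, hC⟩ := hk.exists_bound_of_continuousOn hφ.continuousOn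
  exact .of_bound (hφ.comp_aestronglyMeasurable hg.aestronglyMeasurable) C
    ((ae_nonneg_expMeasure r).mono fun s hs => hC _ (hgk s hs))

section TiltedArgmin

variable {S : Set ℝ} {F H : ℝ → ℝ} {K : ℝ≥0} {s s' c x y : ℝ}

theorem le_of_isMinOn_sub_mul (hFH : LipschitzWith K (F - H)) (hxS : x ∈ S) (hyS : y ∈ S)
    (hx : IsMinOn (fun u => F u - s * u) S x) (hy : IsMinOn (fun u => H u - s' * u) S y)
    (hss' : s + K < s') : x ≤ y := by
  by_contra! hyx
  have h₁ := isMinOn_iff.1 hx y hyS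
  have h₂ := isMinOn_iff.1 hy x hxS
  have h₃ : (F - H) y - (F - H) x ≤ K * (x - y) := by
    have := hFH.dist_le_mul y x
    rw [Real.dist_eq, Real.dist_eq, abs_sub_comm y x, abs_of_pos (sub_pos.2 hyx)] at this
    exact (le_abs_self _).trans this
  simp only [Pi.sub_apply] at h₃
  nlinarith [mul_pos (sub_pos.2 hss') (sub_pos.2 hyx)]

theorem abs_sub_le_of_isMinOn_sub_mul {x' y' : ℝ} (hFH : LipschitzWith K (F - H)) (hc : K < c)
    (hxS : x ∈ S) (hx'S : x' ∈ S) (hyS : y ∈ S) (hy'S : y' ∈ S)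
    (hx : IsMinOn (fun u => F u - s * u) S x) (hx' : IsMinOn (fun u => F u - (s + c) * u) S x')
    (hy : IsMinOn (fun u => H u - s * u) S y) (hy' : IsMinOn (fun u => H u - (s + c) * u) S y') :
    |x - y| ≤ x' - x + (y' - y) := by
  have hK : (K : ℝ) < c := hc
  have hc₀ : 0 < c := K.2.trans_lt hK
  have hF : LipschitzWith 0 (F - F) := by simp
  have hH : LipschitzWith 0 (H - H) := by simp
  have hHF : LipschitzWith K (H - F) := by simpa using hFH.neg
  have hxx' := le_of_isMinOn_sub_mul hF hxS hx'S hx hx' (by simpa using hc₀)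
  have hyy' := le_of_isMinOn_sub_mul hH hyS hy'S hy hy' (by simpa using hc₀)
  have hxy' := le_of_isMinOn_sub_mul hFH hxS hy'S hx hy' (by linarith)
  have hyx' := le_of_isMinOn_sub_mul hHF hyS hx'S hy hx' (by linarith)
  rw [abs_le]
  constructor <;> linarith

end TiltedArgmin

section FollowThePerturbedLeader

def IsPerturbedLeader (l : ℕ → ℝ → ℝ) (S : Set ℝ) (t : ℕ) (s a : ℝ) : Prop :=
  a ∈ S ∧ IsMinOn (fun u => ∑ i ∈ Ico 1 t, l i u - s * u) S a

variable {l : ℕ → ℝ → ℝ} {S : Set ℝ} {K : ℝ≥0} {s β c : ℝ}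

theorem sum_loss_succ_le_of_isPerturbedLeader {N : ℕ} {x : ℕ → ℝ} (hN : 1 ≤ N)
    (hx : ∀ t ∈ Icc 1 N, IsPerturbedLeader l S t s (x t)) (hβ : β ∈ S) :
    ∑ t ∈ Ico 1 N, l t (x (t + 1)) ≤ ∑ t ∈ Ico 1 N, l t β + s * (x 1 - β) := by
  induction N, hN using Nat.le_induction generalizing β with
  | base =>
    have := isMinOn_iff.1 (hx 1 (by simp)).2 β hβ
    simp only [Ico_self, sum_empty] at this ⊢
    linarith
  | succ n hn ih =>
    have hxn := hx (n + 1) (by simp)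
    have hprev := ih (fun t ht => hx t (Icc_subset_Icc_right (by omega) ht)) hxn.1
    have hmin := isMinOn_iff.1 hxn.2 β hβ
    simp only [sum_Ico_succ_top hn] at hmin ⊢
    linarith

theorem sum_loss_le_of_isPerturbedLeader {T : ℕ} {x : ℕ → ℝ} (hT : 1 ≤ T)
    (hS : S ⊆ Set.Icc 0 1) (hs : 0 ≤ s) (hlT : LipschitzWith K (l T))
    (hx : ∀ t ∈ Icc 1 T, IsPerturbedLeader l S t s (x t)) (hβ : β ∈ S) :
    ∑ t ∈ Icc 1 T, l t (x t) ≤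
      ∑ t ∈ Ico 1 T, (l t (x t) - l t (x (t + 1))) + (∑ t ∈ Icc 1 T, l t β + K) + s := by
  have hbtl := sum_loss_succ_le_of_isPerturbedLeader hT hx hβ
  obtain ⟨hx₁0, hx₁1⟩ := hS (hx 1 (by simp [hT])).1
  obtain ⟨hxT0, hxT1⟩ := hS (hx T (by simp [hT])).1
  obtain ⟨hβ0, hβ1⟩ := hS hβ
  have hlast : l T (x T) ≤ l T β + K := by
    have := hlT.dist_le_mul (x T) β
    rw [Real.dist_eq, Real.dist_eq] at this
    have : |x T - β| ≤ 1 := abs_le.2 ⟨by linarith, by linarith⟩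
    nlinarith [le_abs_self (l T (x T) - l T β), K.2]
  have hperturb : s * (x 1 - β) ≤ s := by nlinarith
  rw [← Ico_add_one_right_eq_Icc, sum_Ico_succ_top hT, sum_Ico_succ_top hT, sum_sub_distrib]
  linarith

theorem abs_sub_succ_le_of_isPerturbedLeader {t : ℕ} {x x' y y' : ℝ} (ht : 1 ≤ t)
    (hl : LipschitzWith K (l t)) (hc : K < c)
    (hx : IsPerturbedLeader l S t s x) (hx' : IsPerturbedLeader l S t (s + c) x')
    (hy : IsPerturbedLeader l S (t + 1) s y) (hy' : IsPerturbedLeader l S (t + 1) (s + c) y') :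
    |x - y| ≤ x' - x + (y' - y) := by
  have hFH : LipschitzWith K
      ((fun u => ∑ i ∈ Ico 1 t, l i u) - fun u => ∑ i ∈ Ico 1 (t + 1), l i u) := by
    have hdiff :
        ((fun u => ∑ i ∈ Ico 1 t, l i u) - fun u => ∑ i ∈ Ico 1 (t + 1), l i u) = -l t := by
      ext u
      simp [sum_Ico_succ_top ht]
    exact hdiff ▸ hl.neg
  exact abs_sub_le_of_isMinOn_sub_mul hFH hc hx.1 hx'.1 hy.1 hy'.1 hx.2 hx'.2 hy.2 hy'.2

theorem integral_loss_sub_loss_succ_le {r : ℝ} {t : ℕ} {f h : ℝ → ℝ} (hr : 0 < r)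
    (hS : S ⊆ Set.Icc 0 1) (ht : 1 ≤ t) (hl : LipschitzWith K (l t)) (hc : K < c)
    (hf : Measurable f) (hh : Measurable h)
    (hfL : ∀ s, 0 ≤ s → IsPerturbedLeader l S t s (f s))
    (hhL : ∀ s, 0 ≤ s → IsPerturbedLeader l S (t + 1) s (h s)) :
    ∫ s, (l t (f s) - l t (h s)) ∂expMeasure r ≤ 2 * K * (Real.exp (r * c) - 1) := by
  have hc₀ : 0 ≤ c := K.2.trans hc.le
  have hloss : ∀ g : ℝ → ℝ, Measurable g → (∀ s, 0 ≤ s → g s ∈ S) →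
      Integrable (fun s => l t (g s)) (expMeasure r) := fun g hg hgS =>
    hl.continuous.integrable_comp_expMeasure hr isCompact_Icc hg fun s hs => hS (hgS s hs)
  have hincr : ∀ g : ℝ → ℝ, Measurable g → (∀ s, 0 ≤ s → g s ∈ S) →
      Integrable (fun s => g (s + c) - g s) (expMeasure r) := fun g hg hgS =>
    (continuous_id.integrable_comp_expMeasure hr isCompact_Icc
      (hg.comp (measurable_add_const c)) fun s hs => hS (hgS _ (by linarith))).sub
    (continuous_id.integrable_comp_expMeasure hr isCompact_Icc hg fun s hs => hS (hgS s hs))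
  have hpointwise : ∀ s, 0 ≤ s →
      l t (f s) - l t (h s) ≤ K * ((f (s + c) - f s) + (h (s + c) - h s)) := fun s hs => by
    have hlip := hl.dist_le_mul (f s) (h s)
    rw [Real.dist_eq, Real.dist_eq] at hlip
    have := abs_sub_succ_le_of_isPerturbedLeader ht hl hc (hfL s hs)
      (hfL (s + c) (by linarith)) (hhL s hs) (hhL (s + c) (by linarith))
    nlinarith [le_abs_self (l t (f s) - l t (h s)), K.2]
  calc ∫ s, (l t (f s) - l t (h s)) ∂expMeasure r
      ≤ ∫ s, K * ((f (s + c) - f s) + (h (s + c) - h s)) ∂expMeasure r :=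
        integral_mono_ae ((hloss f hf fun s hs => (hfL s hs).1).sub
          (hloss h hh fun s hs => (hhL s hs).1))
          (((hincr f hf fun s hs => (hfL s hs).1).add
            (hincr h hh fun s hs => (hhL s hs).1)).const_mul _)
          ((ae_nonneg_expMeasure r).mono hpointwise)
    _ = K * (∫ s, (f (s + c) - f s) ∂expMeasure r + ∫ s, (h (s + c) - h s) ∂expMeasure r) := by
        rw [integral_const_mul, integral_add (hincr f hf fun s hs => (hfL s hs).1)
          (hincr h hh fun s hs => (hhL s hs).1)]
    _ ≤ K * ((Real.exp (r * c) - 1) + (Real.exp (r * c) - 1)) := by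
        gcongr <;> refine integral_comp_add_sub_le_expMeasure hr hc₀ ‹_› fun s hs => hS ?_
        exacts [(hfL s hs).1, (hhL s hs).1]
    _ = 2 * K * (Real.exp (r * c) - 1) := by ring

theorem integral_sum_loss_le {r : ℝ} {T : ℕ} {x : ℕ → ℝ → ℝ} (hr : 0 < r) (hT : 1 ≤ T)
    (hS : S ⊆ Set.Icc 0 1) (hl : ∀ t ∈ Icc 1 T, LipschitzWith K (l t)) (hc : K < c)
    (hxm : ∀ t ∈ Icc 1 T, Measurable (x t))
    (hx : ∀ t ∈ Icc 1 T, ∀ s, 0 ≤ s → IsPerturbedLeader l S t s (x t s)) (hβ : β ∈ S) :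
    ∫ s, ∑ t ∈ Icc 1 T, l t (x t s) ∂expMeasure r ≤
      ∑ t ∈ Icc 1 T, l t β + 2 * K * T * (Real.exp (r * c) - 1) + K + r⁻¹ := by
  have := isProbabilityMeasure_expMeasure hr
  have hloss : ∀ t ∈ Icc 1 T, ∀ t' ∈ Icc 1 T, Integrable (fun s => l t (x t' s)) (expMeasure r) :=
    fun t ht t' ht' => (hl t ht).continuous.integrable_comp_expMeasure hr isCompact_Icc
      (hxm t' ht') fun s hs => hS (hx t' ht' s hs).1
  have hsucc : ∀ t ∈ Ico 1 T, t ∈ Icc 1 T ∧ t + 1 ∈ Icc 1 T := by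
    intro t ht
    simp only [mem_Ico, mem_Icc] at ht ⊢
    omega
  have hdiff : ∀ t ∈ Ico 1 T,
      Integrable (fun s => l t (x t s) - l t (x (t + 1) s)) (expMeasure r) := fun t ht =>
    (hloss t (hsucc t ht).1 t (hsucc t ht).1).sub (hloss t (hsucc t ht).1 (t + 1) (hsucc t ht).2)
  have hD : Integrable (fun s => ∑ t ∈ Ico 1 T, (l t (x t s) - l t (x (t + 1) s)))
      (expMeasure r) := integrable_finsetSum _ hdiff
  have hDB : Integrable (fun s => ∑ t ∈ Ico 1 T, (l t (x t s) - l t (x (t + 1) s)) +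
      (∑ t ∈ Icc 1 T, l t β + K)) (expMeasure r) := hD.add (integrable_const _)
  have hstab : ∀ t ∈ Ico 1 T, ∫ s, (l t (x t s) - l t (x (t + 1) s)) ∂expMeasure r ≤
      2 * K * (Real.exp (r * c) - 1) := fun t ht =>
    integral_loss_sub_loss_succ_le hr hS (mem_Ico.1 ht).1 (hl t (hsucc t ht).1) hc
      (hxm t (hsucc t ht).1) (hxm (t + 1) (hsucc t ht).2) (hx t (hsucc t ht).1)
      (hx (t + 1) (hsucc t ht).2)
  have hcard : (#(Ico 1 T) : ℝ) ≤ T := by simp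
  have hexp : 0 ≤ 2 * K * (Real.exp (r * c) - 1) := mul_nonneg (by positivity)
    (sub_nonneg.2 (Real.one_le_exp (mul_nonneg hr.le (K.2.trans hc.le))))
  calc ∫ s, ∑ t ∈ Icc 1 T, l t (x t s) ∂expMeasure r
      ≤ ∫ s, (∑ t ∈ Ico 1 T, (l t (x t s) - l t (x (t + 1) s)) + (∑ t ∈ Icc 1 T, l t β + K) + s)
          ∂expMeasure r :=
        integral_mono_ae (integrable_finsetSum _ fun t ht => hloss t ht t ht)
          (hDB.add (integrable_id_expMeasure hr))
          ((ae_nonneg_expMeasure r).mono fun s hs => sum_loss_le_of_isPerturbedLeader hT hS hs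
            (hl T (by simp [hT])) (fun t ht => hx t ht s hs) hβ)
    _ = ∑ t ∈ Ico 1 T, ∫ s, (l t (x t s) - l t (x (t + 1) s)) ∂expMeasure r +
          (∑ t ∈ Icc 1 T, l t β + K) + r⁻¹ := by
        rw [integral_add hDB (integrable_id_expMeasure hr),
          integral_add hD (integrable_const _), integral_finsetSum _ hdiff, integral_const,
          integral_id_expMeasure hr, probReal_univ, one_smul]
    _ ≤ ∑ t ∈ Icc 1 T, l t β + 2 * K * T * (Real.exp (r * c) - 1) + K + r⁻¹ := by
        have := (sum_le_card_nsmul _ _ _ hstab).trans_eq (nsmul_eq_mul _ _)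
        linarith [mul_le_mul_of_nonneg_right hcard hexp]

theorem integral_sum_loss_le_of_inv_sqrt {T : ℕ} {x : ℕ → ℝ → ℝ} (hK : 0 < K) (hT : 1 ≤ T)
    (hS : S ⊆ Set.Icc 0 1)
    (hl : ∀ t ∈ Icc 1 T, LipschitzWith K (l t)) (hxm : ∀ t ∈ Icc 1 T, Measurable (x t))
    (hx : ∀ t ∈ Icc 1 T, ∀ s, 0 ≤ s → IsPerturbedLeader l S t s (x t s)) (hβ : β ∈ S) :
    ∫ s, ∑ t ∈ Icc 1 T, l t (x t s) ∂expMeasure (√T)⁻¹ ≤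
      ∑ t ∈ Icc 1 T, l t β + (4 * K ^ 2 * Real.exp (2 * K) + 1) * √T + K := by
  have hsqrt : 1 ≤ √(T : ℝ) := Real.one_le_sqrt.2 (by exact_mod_cast hT)
  have hftpl := integral_sum_loss_le (r := (√T)⁻¹) (c := 2 * K) (by positivity) hT hS hl
    (by linarith [NNReal.coe_pos.2 hK]) hxm hx hβ
  have hbudget := nat_mul_exp_div_sqrt_sub_one_le hT (a := 2 * K) (by positivity)
  rw [inv_mul_eq_div, inv_inv] at hftpl
  nlinarith [mul_le_mul_of_nonneg_left hbudget (by positivity : (0 : ℝ) ≤ 2 * K)]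

end FollowThePerturbedLeader

/-- Main regret theorem: Follow-The-Perturbed-Leader with a single exponential
perturbation of rate `η = T^{-1/2}`, run by grid search over a finite `T^{-1/2}`-net
`A'` of the compact set `A ⊆ [0,1]`, achieves `O(√T)` expected regret against the best
fixed parameter in `A`, for any sequence of `G`-Lipschitz per-period losses. -/
theorem ftpl_expected_regret (G : ℝ) (hG : 0 < G) :
    ∃ C : ℝ, 0 < C ∧
      ∀ (T : ℕ), 1 ≤ T →
      ∀ (A : Set ℝ), A.Nonempty → IsCompact A → A ⊆ Set.Icc (0 : ℝ) 1 →
      ∀ (l : ℕ → ℝ → ℝ),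
        (∀ t, 1 ≤ t → t ≤ T → ∀ x y : ℝ, |l t x - l t y| ≤ G * |x - y|) →
      ∀ (A' : Set ℝ), A'.Nonempty → A'.Finite → A' ⊆ A →
        (∀ a ∈ A, ∃ a' ∈ A', |a - a'| ≤ ((T : ℝ)) ^ (-(1 : ℝ) / 2)) →
      ∀ (α : ℕ → ℝ → ℝ),
        (∀ t, 1 ≤ t → t ≤ T → Measurable (α t)) →
        (∀ t, 1 ≤ t → t ≤ T → ∀ s : ℝ, 0 ≤ s → α t s ∈ A') →
        (∀ t, 1 ≤ t → t ≤ T → ∀ s : ℝ, 0 ≤ s → ∀ β ∈ A',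
          (∑ i ∈ Ico 1 t, l i (α t s)) - s * α t s ≤ (∑ i ∈ Ico 1 t, l i β) - s * β) →
        (∫ s, (∑ t ∈ Icc 1 T, l t (α t s)) ∂(expMeasure (((T : ℝ)) ^ (-(1 : ℝ) / 2)))) -
            sInf ((fun a => ∑ t ∈ Icc 1 T, l t a) '' A) ≤ C * Real.sqrt T := by
  refine ⟨4 * G ^ 2 * Real.exp (2 * G) + 2 * G + 1, by positivity, ?_⟩
  intro T hT A hA _ hA01 l hl A' _ _ hA'A hnet α hαm hαA' hαmin
  have hη : (T : ℝ) ^ (-(1 : ℝ) / 2) = (√T)⁻¹ := by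
    rw [Real.sqrt_eq_rpow, ← Real.rpow_neg (Nat.cast_nonneg T)]
    ring_nf
  rw [hη] at hnet ⊢
  have hK : (G.toNNReal : ℝ) = G := Real.coe_toNNReal G hG.le
  have hlK : ∀ t ∈ Icc 1 T, LipschitzWith G.toNNReal (l t) := fun t ht =>
    .of_dist_le_mul fun x y => by
      simpa only [hK, Real.dist_eq] using hl t (mem_Icc.1 ht).1 (mem_Icc.1 ht).2 x y
  have hleader : ∀ t ∈ Icc 1 T, ∀ s, 0 ≤ s → IsPerturbedLeader l A' t s (α t s) :=
    fun t ht s hs => ⟨hαA' t (mem_Icc.1 ht).1 (mem_Icc.1 ht).2 s hs,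
      isMinOn_iff.2 (hαmin t (mem_Icc.1 ht).1 (mem_Icc.1 ht).2 s hs)⟩
  have hsqrt : 1 ≤ √(T : ℝ) := Real.one_le_sqrt.2 (by exact_mod_cast hT)
  rw [sub_le_comm]
  refine le_csInf (hA.image _) ?_
  rintro _ ⟨a, ha, rfl⟩
  obtain ⟨β, hβ, hab⟩ := hnet a ha
  have hftpl := integral_sum_loss_le_of_inv_sqrt (Real.toNNReal_pos.2 hG) hT (hA'A.trans hA01)
    hlK (fun t ht => hαm t (mem_Icc.1 ht).1 (mem_Icc.1 ht).2) hleader hβ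
  have hnear := sum_le_sum_add_card_mul_of_lipschitzWith hlK hab
  rw [hK] at hftpl
  rw [Nat.card_Icc, Nat.add_sub_cancel, hK, mul_left_comm, ← div_eq_mul_inv, Real.div_sqrt]
    at hnear
  linarith [mul_le_mul_of_nonneg_left hsqrt hG.le]
end

section
/- Let (Ω, 𝓕, P) be a probability space, let Z be an essentially bounded real-valued random variable, and let α ∈ (0, 1]. Then inf_{y ∈ ℝ} ( y + α⁻¹·E[(Z − y)⁺] ) ≤ 0 if and only if there exists y ≤ 0 with y + α⁻¹·E[(Z − y)⁺] ≤ 0, where (z)⁺ := max(z, 0). -/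
open MeasureTheory Filter

/-! The Rockafellar–Uryasev function `F y = y + α⁻¹ E[(Z − y)⁺]` dominates `y`, so a point
where `F ≤ 0` is automatically nonpositive, and it only remains to see that the infimum is
attained. `F` is continuous (the expectation is 1-Lipschitz in `y`); below an essential lower
bound `c` of `Z` it is affine with slope `1 − α⁻¹ ≤ 0`, and far to the right `F y ≥ y`; so `F`
exceeds `F c` outside a compact set. -/

section CVaR

variable {Ω : Type*} [MeasurableSpace Ω] (P : Measure Ω) (Z : Ω → ℝ) (α : ℝ)

noncomputable def cvarObjective (y : ℝ) : ℝ := y + α⁻¹ * ∫ ω, max (Z ω - y) 0 ∂P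

variable {P Z α}

theorem le_cvarObjective (hα : 0 ≤ α) (y : ℝ) : y ≤ cvarObjective P Z α y :=
  le_add_of_nonneg_right <|
    mul_nonneg (inv_nonneg.2 hα) (integral_nonneg fun _ => le_max_right _ _)

theorem lipschitzWith_integral_max_sub [IsProbabilityMeasure P] (hZ : Integrable Z P) :
    LipschitzWith 1 fun y => ∫ ω, max (Z ω - y) 0 ∂P := by
  have hint (y : ℝ) : Integrable (fun ω => max (Z ω - y) 0) P :=
    (hZ.sub (integrable_const y)).pos_part
  refine LipschitzWith.of_dist_le_mul fun y y' => ?_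
  rw [Real.dist_eq, NNReal.coe_one, one_mul, ← integral_sub (hint y) (hint y')]
  have hpointwise : ∀ ω, ‖max (Z ω - y) 0 - max (Z ω - y') 0‖ ≤ dist y y' := fun ω =>
    (abs_max_sub_max_le_abs _ _ _).trans_eq <| by
      rw [Real.dist_eq, sub_sub_sub_cancel_left, abs_sub_comm]
  simpa using norm_integral_le_of_norm_le_const (μ := P) (.of_forall hpointwise)

theorem continuous_cvarObjective [IsProbabilityMeasure P] (hZ : Integrable Z P) :
    Continuous (cvarObjective P Z α) :=
  continuous_id.add (continuous_const.mul (lipschitzWith_integral_max_sub hZ).continuous)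

theorem cvarObjective_eq_of_ae_le [IsProbabilityMeasure P] (hZ : Integrable Z P) {y : ℝ}
    (hy : ∀ᵐ ω ∂P, y ≤ Z ω) :
    cvarObjective P Z α y = (1 - α⁻¹) * y + α⁻¹ * ∫ ω, Z ω ∂P := by
  have hpos : ∫ ω, max (Z ω - y) 0 ∂P = ∫ ω, Z ω - y ∂P :=
    integral_congr_ae <| hy.mono fun ω hω => max_eq_left (sub_nonneg.2 hω)
  rw [cvarObjective, hpos, integral_sub hZ (integrable_const y)]
  simp only [integral_const, probReal_univ, one_smul]
  ring

theorem cvarObjective_le_of_le_of_ae_le [IsProbabilityMeasure P] (hZ : Integrable Z P)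
    (hα : α ∈ Set.Ioc 0 1) {c y : ℝ} (hc : ∀ᵐ ω ∂P, c ≤ Z ω) (hy : y ≤ c) :
    cvarObjective P Z α c ≤ cvarObjective P Z α y := by
  rw [cvarObjective_eq_of_ae_le hZ hc, cvarObjective_eq_of_ae_le hZ (hc.mono fun _ => hy.trans)]
  have hslope : 1 - α⁻¹ ≤ 0 := sub_nonpos.2 ((one_le_inv₀ hα.1).2 hα.2)
  nlinarith

theorem exists_forall_cvarObjective_le [IsProbabilityMeasure P] (hZ : Integrable Z P)
    (hα : α ∈ Set.Ioc 0 1) {c : ℝ} (hc : ∀ᵐ ω ∂P, c ≤ Z ω) :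
    ∃ y₀, ∀ y, cvarObjective P Z α y₀ ≤ cvarObjective P Z α y := by
  refine (continuous_cvarObjective hZ).exists_forall_le' c ?_
  rw [cocompact_eq_atBot_atTop, eventually_sup]
  exact ⟨eventually_atBot.2 ⟨c, fun y hy => cvarObjective_le_of_le_of_ae_le hZ hα hc hy⟩,
    eventually_atTop.2 ⟨cvarObjective P Z α c, fun y hy =>
      hy.trans (le_cvarObjective hα.1.le y)⟩⟩

end CVaR

/-- First step of the CVaR satisficing duality: `CVaR_α(Z) ≤ 0`, with
`CVaR_α(Z) = inf_y ( y + α⁻¹ E[(Z − y)⁺] )`, holds iff some nonpositive `y`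
witnesses the inequality. -/
theorem cvar_nonpos_iff_witness {Ω : Type*} [MeasurableSpace Ω] (P : Measure Ω)
    [IsProbabilityMeasure P] (Z : Ω → ℝ) (hZ : MemLp Z ⊤ P)
    (α : ℝ) (hα : α ∈ Set.Ioc (0 : ℝ) 1) :
    (⨅ y : ℝ, (y + α⁻¹ * ∫ ω, max (Z ω - y) 0 ∂P)) ≤ 0 ↔
      ∃ y : ℝ, y ≤ 0 ∧ y + α⁻¹ * (∫ ω, max (Z ω - y) 0 ∂P) ≤ 0 := by
  change (⨅ y, cvarObjective P Z α y) ≤ 0 ↔ ∃ y, y ≤ 0 ∧ cvarObjective P Z α y ≤ 0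
  have hlower : ∀ᵐ ω ∂P, -lpNorm Z ⊤ P ≤ Z ω :=
    (ae_le_lpNorm_exponent_top hZ).mono fun ω hω => neg_le_of_abs_le hω
  obtain ⟨y₀, hmin⟩ := exists_forall_cvarObjective_le (hZ.integrable le_top) hα hlower
  have hbdd : BddBelow (Set.range (cvarObjective P Z α)) := ⟨_, Set.forall_mem_range.2 hmin⟩
  constructor
  · intro hinf
    have hy₀ : cvarObjective P Z α y₀ ≤ 0 := (le_ciInf hmin).trans hinf
    exact ⟨y₀, (le_cvarObjective hα.1.le y₀).trans hy₀, hy₀⟩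
  · rintro ⟨y, -, hy⟩
    exact (ciInf_le hbdd y).trans hy
end
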